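/- For every condensed word α with |α| ≥ 2, loc(α) ≤ pathwidth(G_α), where G_α is the graph on positions of α with edges between consecutive positions and between all pairs of positions carrying the same letter. -/

import Mathlib

noncomputable section

attribute [local instance] Classical.propDecidable

variable {X : Type*} [DecidableEq X]

/-- Number of maximal blocks of `true`s in a list of booleans, where the first
argument is the preceding symbol. -/
def blocksAux : Bool → List Bool → ℕ
  | _, [] => 0
  | prev, b :: rest => (if b = true ∧ prev = false then 1 else 0) + blocksAux b rest

/-- Number of maximal contiguous blocks of positions of `w` whose letter lies in `S`. -/
def blockCount (w : List X) (S : List X) : ℕ :=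
  blocksAux false (w.map (fun x => decide (x ∈ S)))

/-- `σ` is a marking sequence for `w`: an enumeration, without repetition,
of the alphabet of `w`. -/
def IsMarkingSeq (w σ : List X) : Prop := σ.Nodup ∧ σ.toFinset = w.toFinset

/-- The marking number of the marking sequence `σ` on `w`: the maximum, over all
stages `i`, of the number of maximal contiguous marked blocks after marking the
first `i` letters of `σ`. -/
def markingNumber (w σ : List X) : ℕ :=
  Finset.sup (Finset.range (σ.length + 1)) (fun i => blockCount w (σ.take i))

/-- The locality number of `w`: the minimum marking number over all marking
sequences for `w`. -/
def locality (w : List X) : ℕ :=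
  sInf {n | ∃ σ, IsMarkingSeq w σ ∧ markingNumber w σ = n}

/-- `B 0, B 1, ..., B m` is a path decomposition of the graph `G`: every edge is
covered by some bag, and the bags containing any fixed vertex form a nonempty
contiguous interval of indices. -/
def IsPathDecomp {W : Type*} (G : SimpleGraph W) (m : ℕ) (B : ℕ → Finset W) : Prop :=
  (∀ u v, G.Adj u v → ∃ t ≤ m, u ∈ B t ∧ v ∈ B t) ∧
  (∀ v : W, ∃ i j, i ≤ j ∧ j ≤ m ∧ ∀ t, v ∈ B t ↔ (i ≤ t ∧ t ≤ j))

/-- The pathwidth of a graph: the minimum, over path decompositions, of the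
maximum bag size minus one. -/
def pathwidth {W : Type*} (G : SimpleGraph W) : ℕ :=
  sInf {w | ∃ m B, IsPathDecomp G m B ∧ ∀ t, (B t).card ≤ w + 1}

/-- The graph `G_α` of the word `α`: vertices are the positions of `α`, and edges
connect consecutive positions as well as every pair of distinct positions carrying
the same letter. -/
def wordGraph (α : List X) : SimpleGraph (Fin α.length) :=
  SimpleGraph.fromRel (fun i j => ((i : ℕ) + 1 = (j : ℕ)) ∨ α.get i = α.get j)

/-!
Order the positions of `α` by their first bag in a path decomposition of width `k` (ties broken
arbitrarily), and mark the letters in the order of their last occurrence. When the first `i`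
letters are marked and `y` is the next one, let `z` be the last occurrence of `y`: every marked
position comes before `z`, and every unmarked letter occurs at or after `z`. So every edge of
`G_α` between a marked and an unmarked position has an endpoint among the positions before `z`
with a neighbour at or after `z`; these lie, together with `z`, in the first bag of `z`, so there
are at most `k` of them. Cutting the word at the unmarked position `z` and charging each block to
a covered endpoint of its boundary edge on the side of `z` bounds the number of blocks by `k`.
After the last letter there is a single block, and `k ≥ 1` because `G_α` has an edge.
-/

lemma blocksAux_append (a b : List Bool) (prev : Bool) :
    blocksAux prev (a ++ b) = blocksAux prev a + blocksAux (a.getLastD prev) b := by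
  induction a generalizing prev with
  | nil => simp [blocksAux]
  | cons x xs ih => simp only [List.cons_append, blocksAux, ih, List.getLastD_cons]; omega

lemma blocksAux_false_cons (prev : Bool) (l : List Bool) :
    blocksAux prev (false :: l) = blocksAux false l := by
  simp [blocksAux]

lemma blocksAux_reverse (l : List Bool) : blocksAux false l.reverse = blocksAux false l := by
  induction l with
  | nil => rfl
  | cons x xs ih =>
    rw [List.reverse_cons, blocksAux_append, ih]
    cases x
    · simp [blocksAux]
    · cases xs with
      | nil => simp [blocksAux]
      | cons y ys => cases y <;> simp [blocksAux, List.getLastD_eq_getLast?, add_comm]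

lemma blocksAux_le_one (l : List Bool) (h : ∀ b ∈ l, b = true) : blocksAux false l ≤ 1 := by
  have htrue : ∀ l : List Bool, (∀ b ∈ l, b = true) → blocksAux true l = 0 := by
    intro l h
    induction l with
    | nil => rfl
    | cons x xs ih => simp_all [blocksAux]
  cases l with
  | nil => simp [blocksAux]
  | cons x xs => simp_all [blocksAux]

/-- For consecutive positions, given as `(marked, covered)` flags: if exactly one of them is
marked, one of them is covered. -/
def CoversChange (x y : Bool × Bool) : Prop := x.1 ≠ y.1 → x.2 = true ∨ y.2 = true

lemma coversChange_comm {x y : Bool × Bool} : CoversChange x y ↔ CoversChange y x := by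
  simp only [CoversChange, ne_comm, or_comm]

/-- Each block is charged to the position just before it if that one is covered, and to its own
first position otherwise. -/
lemma blocksAux_le_count_of_isChain {b c : Bool} {L : List (Bool × Bool)}
    (h : ((b, c) :: L).IsChain CoversChange) :
    blocksAux b (L.map Prod.fst) ≤
      (L.map Prod.snd).count true + if b = false ∧ c = true then 1 else 0 := by
  induction L generalizing b c with
  | nil => simp [blocksAux]
  | cons x L ih =>
    obtain ⟨b', c'⟩ := x
    rw [List.isChain_cons_cons] at h
    have hrest := ih h.2
    have hstep : CoversChange (b, c) (b', c') := h.1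
    simp only [List.map_cons, blocksAux, List.count_cons]
    cases b <;> cases c <;> cases b' <;> cases c' <;> simp_all [CoversChange] <;> omega

lemma blocksAux_le_count_of_mem {L : List (Bool × Bool)} (h : L.IsChain CoversChange)
    (hz : (false, false) ∈ L) :
    blocksAux false (L.map Prod.fst) ≤ (L.map Prod.snd).count true := by
  obtain ⟨L₁, L₂, rfl⟩ := List.append_of_mem hz
  have h₁ : ((false, false) :: L₁.reverse).IsChain CoversChange := by
    have : (L₁ ++ [(false, false)]).IsChain CoversChange :=
      (List.append_cons _ _ _ ▸ h).left_of_append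
    rw [← List.reverse_concat', List.isChain_reverse]
    exact this.imp fun _ _ => coversChange_comm.1
  have e₁ := blocksAux_le_count_of_isChain h₁
  have e₂ := blocksAux_le_count_of_isChain (h.right_of_append (l₁ := L₁))
  rw [List.map_reverse, blocksAux_reverse, List.map_reverse, List.count_reverse] at e₁
  simp only [List.map_append, List.map_cons, blocksAux_append, blocksAux_false_cons,
    List.count_append, List.count_cons, beq_true, Bool.false_eq_true, and_false, ↓reduceIte,
    add_zero] at e₁ e₂ ⊢
  omega

lemma blockCount_le_card_of_cover (w S : List X) (T : Finset (Fin w.length)) (z : Fin w.length)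
    (hz : w.get z ∉ S) (hzT : z ∉ T)
    (hcover : ∀ p q : Fin w.length, p.1 + 1 = q.1 → (w.get p ∈ S ↔ w.get q ∉ S) → p ∈ T ∨ q ∈ T) :
    blockCount w S ≤ T.card := by
  set L := List.ofFn fun p => (decide (w.get p ∈ S), decide (p ∈ T))
  have hmarks : L.map Prod.fst = w.map fun x => decide (x ∈ S) := by
    conv_rhs => rw [← List.ofFn_get w]
    simp only [L, List.map_ofFn]
    rfl
  have hcount : (L.map Prod.snd).count true = T.card := by
    rw [List.map_ofFn, List.ofFn_eq_map, List.count_eq_countP, List.countP_map]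
    simp only [Function.comp_def, beq_true]
    rw [List.countP_eq_length_filter,
      ← List.toFinset_card_of_nodup ((List.nodup_finRange _).filter _)]
    congr 1
    ext p
    simp
  have hchain : L.IsChain CoversChange := by
    refine List.isChain_ofFn.2 fun i hi hne => ?_
    have hchange : w.get ⟨i, by omega⟩ ∈ S ↔ w.get ⟨i + 1, hi⟩ ∉ S := by
      by_cases a : w.get ⟨i, by omega⟩ ∈ S <;> by_cases b : w.get ⟨i + 1, hi⟩ ∈ S <;>
        simp_all
    simpa using hcover _ _ rfl hchange
  have hzL : (false, false) ∈ L := List.mem_ofFn.2 ⟨z, by simpa [hzT] using hz⟩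
  rw [blockCount, ← hmarks, ← hcount]
  exact blocksAux_le_count_of_mem hchain hzL

section PathDecomposition

variable {W : Type*} {G : SimpleGraph W} {m k : ℕ} {B : ℕ → Finset W}

lemma exists_isPathDecomp_card_le_pathwidth [Fintype W] (G : SimpleGraph W) :
    ∃ m B, IsPathDecomp G m B ∧ ∀ t, (B t).card ≤ pathwidth G + 1 := by
  refine Nat.sInf_mem (s := {w | ∃ m B, IsPathDecomp G m B ∧ ∀ t, (B t).card ≤ w + 1})
    ⟨Fintype.card W, 0, fun t => if t = 0 then Finset.univ else ∅,
      ⟨fun _ _ _ => ⟨0, le_rfl, by simp, by simp⟩, fun _ => ⟨0, 0, le_rfl, le_rfl, ?_⟩⟩, ?_⟩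
  · intro t
    by_cases ht : t = 0 <;> simp [ht]
  · intro t
    by_cases ht : t = 0 <;> simp [ht, Finset.card_univ]

lemma IsPathDecomp.one_le_of_adj (hB : IsPathDecomp G m B) (hcard : ∀ t, (B t).card ≤ k + 1)
    {u v : W} (huv : G.Adj u v) : 1 ≤ k := by
  obtain ⟨t, -, hu, hv⟩ := hB.1 u v huv
  have : ({u, v} : Finset W).card ≤ (B t).card :=
    Finset.card_le_card (Finset.insert_subset hu (Finset.singleton_subset_iff.2 hv))
  rw [Finset.card_pair huv.ne] at this
  have := hcard t
  omega

lemma IsPathDecomp.mem_of_adj (hB : IsPathDecomp G m B) {u v : W} (huv : G.Adj u v) {i t : ℕ}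
    (hu : u ∈ B i) (hit : i ≤ t) (hv : ∀ t' < t, v ∉ B t') : u ∈ B t := by
  obtain ⟨t₀, -, hu₀, hv₀⟩ := hB.1 u v huv
  have ht₀ : t ≤ t₀ := not_lt.1 fun h => hv t₀ h hv₀
  obtain ⟨a, b, -, -, hab⟩ := hB.2 u
  rw [hab] at hu hu₀ ⊢
  omega

def boundaryBefore [Fintype W] (G : SimpleGraph W) (f : W → ℕ) (z : W) : Finset W :=
  Finset.univ.filter fun u => f u < f z ∧ ∃ v, G.Adj u v ∧ f z ≤ f v

/-- Vertices are ordered by their first bag, ties being broken by an enumeration of `W`. -/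
lemma IsPathDecomp.exists_injective_card_boundaryBefore_le [Fintype W]
    (hB : IsPathDecomp G m B) (hcard : ∀ t, (B t).card ≤ k + 1) :
    ∃ f : W → ℕ, Function.Injective f ∧ ∀ z, (boundaryBefore G f z).card ≤ k := by
  choose s e hse _ hmem using hB.2
  set N := Fintype.card W
  set g := Fintype.equivFin W
  set f : W → ℕ := fun v => N * s v + g v
  have hdiv : ∀ v, f v / N = s v := fun v => by
    rw [Nat.mul_add_div (Fin.pos (g v)), Nat.div_eq_of_lt (g v).isLt, add_zero]
  have hmono : ∀ u v, f u ≤ f v → s u ≤ s v := fun u v h => by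
    rw [← hdiv u, ← hdiv v]
    exact Nat.div_le_div_right h
  have hfirst : ∀ v, v ∈ B (s v) := fun v => (hmem v (s v)).2 ⟨le_rfl, hse v⟩
  refine ⟨f, fun u v h => ?_, fun z => ?_⟩
  · have hs : s u = s v := by rw [← hdiv u, ← hdiv v, h]
    simp only [f, hs, add_right_inj] at h
    exact g.injective (Fin.ext h)
  · have hsub : insert z (boundaryBefore G f z) ⊆ B (s z) := by
      intro u hu
      rcases Finset.mem_insert.1 hu with rfl | hu
      · exact hfirst u
      obtain ⟨hlt, v, huv, hle⟩ := (Finset.mem_filter.1 hu).2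
      refine hB.mem_of_adj huv (hfirst u) (hmono _ _ hlt.le) fun t' ht' hv => ?_
      have := ((hmem v t').1 hv).1
      have := hmono _ _ hle
      omega
    have hz : z ∉ boundaryBefore G f z := by simp [boundaryBefore]
    have := (Finset.card_le_card hsub).trans (hcard _)
    rw [Finset.card_insert_of_notMem hz] at this
    omega

end PathDecomposition

section Word

variable {w : List X}

omit [DecidableEq X] in
lemma wordGraph_adj_of_succ {p q : Fin w.length} (h : p.1 + 1 = q.1) : (wordGraph w).Adj p q := by
  rw [wordGraph, SimpleGraph.fromRel_adj]
  exact ⟨fun hpq => by simp [hpq] at h, Or.inl (Or.inl h)⟩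

omit [DecidableEq X] in
lemma wordGraph_adj_of_get_eq {p q : Fin w.length} (hpq : p ≠ q) (h : w.get p = w.get q) :
    (wordGraph w).Adj p q := by
  rw [wordGraph, SimpleGraph.fromRel_adj]
  exact ⟨hpq, Or.inl (Or.inr h)⟩

def lastOccKey (w : List X) (f : Fin w.length → ℕ) (x : X) : ℕ :=
  (Finset.univ.filter fun p => w.get p = x).sup f

lemma le_lastOccKey (f : Fin w.length → ℕ) (p : Fin w.length) :
    f p ≤ lastOccKey w f (w.get p) :=
  Finset.le_sup (by simp)

lemma exists_lastOccKey_eq (f : Fin w.length → ℕ) {x : X} (hx : x ∈ w) :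
    ∃ p, w.get p = x ∧ f p = lastOccKey w f x := by
  obtain ⟨p, hp⟩ := List.mem_iff_get.1 hx
  obtain ⟨q, hq, hqf⟩ := Finset.exists_mem_eq_sup (Finset.univ.filter fun q => w.get q = x)
    ⟨p, by simpa using hp⟩ f
  exact ⟨q, (Finset.mem_filter.1 hq).2, hqf.symm⟩

lemma lastOccKey_injOn {f : Fin w.length → ℕ} (hf : Function.Injective f) :
    Set.InjOn (lastOccKey w f) {x | x ∈ w} := by
  intro x hx y hy hxy
  obtain ⟨p, rfl, hp⟩ := exists_lastOccKey_eq f hx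
  obtain ⟨q, rfl, hq⟩ := exists_lastOccKey_eq f hy
  rw [hf (hp.trans (hxy.trans hq.symm))]

lemma exists_isMarkingSeq_pairwise_lt (w : List X) {K : X → ℕ} (hK : Set.InjOn K {x | x ∈ w}) :
    ∃ σ, IsMarkingSeq w σ ∧ σ.Pairwise (K · < K ·) := by
  let r : X → X → Prop := fun a b => K a ≤ K b
  have : Std.Total r := ⟨fun a b => le_total (K a) (K b)⟩
  have : IsTrans X r := ⟨fun _ _ _ => le_trans⟩
  have hperm := List.perm_insertionSort r w.dedup
  have hmem : ∀ x, x ∈ w.dedup.insertionSort r ↔ x ∈ w := by simp [hperm.mem_iff]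
  have hnodup : (w.dedup.insertionSort r).Nodup := hperm.nodup_iff.2 (List.nodup_dedup w)
  refine ⟨w.dedup.insertionSort r, ⟨hnodup, by ext x; simp [hmem]⟩, ?_⟩
  exact ((List.pairwise_insertionSort r _).and hnodup).imp_of_mem fun ha hb h =>
    lt_of_le_of_ne h.1 fun hab => h.2 (hK ((hmem _).1 ha) ((hmem _).1 hb) hab)

lemma blockCount_le_card_boundaryBefore (f : Fin w.length → ℕ) (S : List X) (z : Fin w.length)
    (hS : ∀ p, w.get p ∈ S → f p < f z)
    (hunmarked : ∀ p, w.get p ∉ S → ∃ q, w.get q = w.get p ∧ f z ≤ f q)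
    (hz : w.get z ∉ S) : blockCount w S ≤ (boundaryBefore (wordGraph w) f z).card := by
  have hedge : ∀ a b, (wordGraph w).Adj a b → w.get a ∈ S → w.get b ∉ S →
      a ∈ boundaryBefore (wordGraph w) f z ∨ b ∈ boundaryBefore (wordGraph w) f z := by
    intro a b hab ha hb
    simp only [boundaryBefore, Finset.mem_filter, Finset.mem_univ, true_and]
    by_cases hbz : f b < f z
    · obtain ⟨q, hq, hzq⟩ := hunmarked b hb
      exact Or.inr ⟨hbz, q, wordGraph_adj_of_get_eq (by rintro rfl; omega) hq.symm, hzq⟩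
    · exact Or.inl ⟨hS a ha, b, hab, not_lt.1 hbz⟩
  refine blockCount_le_card_of_cover w S _ z hz (by simp [boundaryBefore]) fun p q hpq hchange => ?_
  have hadj := wordGraph_adj_of_succ hpq
  by_cases hp : w.get p ∈ S
  · exact hedge p q hadj hp (hchange.1 hp)
  · exact (hedge q p hadj.symm (not_not.1 (mt hchange.2 hp)) hp).symm

lemma exists_blockCount_take_le {σ : List X} (hσ : IsMarkingSeq w σ) (f : Fin w.length → ℕ)
    (hsort : σ.Pairwise (lastOccKey w f · < lastOccKey w f ·)) {i : ℕ} (hi : i < σ.length) :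
    ∃ z, blockCount w (σ.take i) ≤ (boundaryBefore (wordGraph w) f z).card := by
  set K := lastOccKey w f
  set y := σ[i]
  have hsplit : σ = σ.take i ++ y :: σ.drop (i + 1) := by
    rw [← List.drop_eq_getElem_cons hi, List.take_append_drop]
  have hsorted := hsort
  rw [hsplit, List.pairwise_append, List.pairwise_cons] at hsorted
  have hbefore : ∀ x ∈ σ.take i, K x < K y := fun x hx => hsorted.2.2 x hx y List.mem_cons_self
  have hafter : ∀ x ∈ σ, x ∉ σ.take i → K y ≤ K x := by
    intro x hx hxS
    rw [hsplit, List.mem_append, List.mem_cons] at hx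
    rcases hx with hx | rfl | hx
    · exact absurd hx hxS
    · exact le_rfl
    · exact (hsorted.2.1.1 x hx).le
  have hmem : ∀ x, x ∈ σ ↔ x ∈ w := fun x => by
    rw [← List.mem_toFinset, hσ.2, List.mem_toFinset]
  obtain ⟨z, hzy, hfz⟩ := exists_lastOccKey_eq f ((hmem y).1 (List.getElem_mem hi))
  refine ⟨z, blockCount_le_card_boundaryBefore f _ z (fun p hp => ?_) (fun p hp => ?_) ?_⟩
  · exact (le_lastOccKey f p).trans_lt (hfz ▸ hbefore _ hp)
  · obtain ⟨q, hq, hfq⟩ := exists_lastOccKey_eq f (List.get_mem w p)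
    exact ⟨q, hq, hfz ▸ hfq ▸ hafter _ ((hmem _).2 (List.get_mem w p)) hp⟩
  · rw [hzy]
    exact fun h => lt_irrefl _ (hbefore y h)

lemma markingNumber_le {σ : List X} {k : ℕ} (hσ : IsMarkingSeq w σ) (hk : 1 ≤ k)
    (h : ∀ i < σ.length, blockCount w (σ.take i) ≤ k) : markingNumber w σ ≤ k := by
  refine Finset.sup_le fun i _ => ?_
  by_cases hi : i < σ.length
  · exact h i hi
  rw [List.take_of_length_le (not_lt.1 hi)]
  refine (blocksAux_le_one _ fun b hb => ?_).trans hk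
  obtain ⟨x, hx, rfl⟩ := List.mem_map.1 hb
  simpa [← List.mem_toFinset, hσ.2] using hx

lemma locality_le_markingNumber {σ : List X} (hσ : IsMarkingSeq w σ) :
    locality w ≤ markingNumber w σ := by
  unfold locality
  exact Nat.sInf_le ⟨σ, hσ, rfl⟩

end Word

theorem locality_le_pathwidth_general (α : List X) (hlen : 2 ≤ α.length) :
    locality α ≤ pathwidth (wordGraph α) := by
  obtain ⟨m, B, hB, hcard⟩ := exists_isPathDecomp_card_le_pathwidth (wordGraph α)
  obtain ⟨f, hf, hsep⟩ := hB.exists_injective_card_boundaryBefore_le hcard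
  obtain ⟨σ, hσ, hsort⟩ := exists_isMarkingSeq_pairwise_lt α (lastOccKey_injOn hf)
  have hk : 1 ≤ pathwidth (wordGraph α) :=
    hB.one_le_of_adj hcard (wordGraph_adj_of_succ (p := ⟨0, by omega⟩) (q := ⟨1, hlen⟩) rfl)
  refine (locality_le_markingNumber hσ).trans (markingNumber_le hσ hk fun i hi => ?_)
  obtain ⟨z, hz⟩ := exists_blockCount_take_le hσ f hsort hi
  exact hz.trans (hsep z)

/-- For every condensed word `α` with `|α| ≥ 2`, `loc(α) ≤ pathwidth(G_α)`. -/
theorem locality_le_pathwidth (α : List X) (hcond : α.Chain' (· ≠ ·))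
    (hlen : 2 ≤ α.length) :
    locality α ≤ pathwidth (wordGraph α) :=
  locality_le_pathwidth_general α hlen
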